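/- Assume hypotheses (H1) and (H2). Then for every η ∈ X ∖ {□} such that Φ(η,□) ≤ Φ(η,⊞), one has H(η) > H(□) = 0. -/

import Mathlib

/-!
Suppose `H η ≤ H □` and `η ≠ □`. If `η ≠ ⊞`, (H2) lets us descend from `η` through states of
strictly decreasing energy, each step crossing a barrier at most `V*` above its starting point.
All these states lie below `□`, so the descent (finite, as `X` is) can only stop at `⊞`, giving
`Φ(η,⊞) ≤ H η + V* ≤ H □ + V* < Φ(□,⊞)`; but `Φ(□,⊞) ≤ max (Φ(□,η), Φ(η,⊞)) = Φ(η,⊞)`.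
If `η = ⊞`, then `H □ ≤ Φ(⊞,□) ≤ Φ(⊞,⊞) = H ⊞`, so `□` would be a second ground state,
against (H1).
-/

open scoped Classical

variable {X : Type*}

/-- `ω` (restricted to 0,…,L) is a path of allowed moves from `a` to `b`. -/
def IsPathW (rel : X → X → Prop) (a b : X) (L : ℕ) (ω : ℕ → X) : Prop :=
  ω 0 = a ∧ ω L = b ∧ ∀ i < L, rel (ω i) (ω (i + 1))

/-- The maximal energy along the path `ω = (ω 0, …, ω L)`. -/
noncomputable def pathMax (H : X → ℝ) (L : ℕ) (ω : ℕ → X) : ℝ :=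
  (Finset.range (L + 1)).sup' Finset.nonempty_range_add_one fun i => H (ω i)

/-- Communication height Φ(a,b) between two configurations. -/
noncomputable def commH (rel : X → X → Prop) (H : X → ℝ) (a b : X) : ℝ :=
  sInf { m : ℝ | ∃ L ω, IsPathW rel a b L ω ∧ m = pathMax H L ω }

/-- Communication height Φ(A,B) between two sets of configurations. -/
noncomputable def commHS (rel : X → X → Prop) (H : X → ℝ) (A B : Set X) : ℝ :=
  sInf { m : ℝ | ∃ a ∈ A, ∃ b ∈ B, m = commH rel H a b }

/-- The graph (X,∼) is connected. -/
def ConnGraph (rel : X → X → Prop) : Prop :=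
  ∀ a b : X, ∃ L ω, IsPathW rel a b L ω

namespace IsPathW

variable {rel : X → X → Prop} {a b c : X} {L L₁ L₂ : ℕ} {ω ω₁ ω₂ : ℕ → X}

lemma reverse (hsymm : Symmetric rel) (h : IsPathW rel a b L ω) :
    IsPathW rel b a L (fun i => ω (L - i)) := by
  refine ⟨by simp [h.2.1], by simp [h.1], fun i hi => ?_⟩
  have hstep := hsymm (h.2.2 (L - (i + 1)) (by omega))
  rwa [show L - (i + 1) + 1 = L - i by omega] at hstep

lemma append (h₁ : IsPathW rel a b L₁ ω₁) (h₂ : IsPathW rel b c L₂ ω₂) :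
    IsPathW rel a c (L₁ + L₂) (fun i => if i ≤ L₁ then ω₁ i else ω₂ (i - L₁)) := by
  refine ⟨by simp [h₁.1], ?_, fun i hi => ?_⟩
  · dsimp only
    split_ifs with h
    · rw [show L₁ + L₂ = L₁ by omega, h₁.2.1, ← h₂.2.1, show L₂ = 0 by omega, h₂.1]
    · rw [show L₁ + L₂ - L₁ = L₂ by omega, h₂.2.1]
  · rcases lt_trichotomy i L₁ with hlt | rfl | hgt
    · simpa [hlt.le, Nat.succ_le_of_lt hlt] using h₁.2.2 i hlt
    · simpa [h₁.2.1, ← h₂.1] using h₂.2.2 0 (by omega)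
    · simp only [show ¬i ≤ L₁ by omega, show ¬i + 1 ≤ L₁ by omega, if_false,
        show i + 1 - L₁ = i - L₁ + 1 by omega]
      exact h₂.2.2 (i - L₁) (by omega)

end IsPathW

section PathMax

variable {H : X → ℝ} {L : ℕ} {ω : ℕ → X} {m : ℝ}

lemma le_pathMax (ω : ℕ → X) {i : ℕ} (hi : i ≤ L) : H (ω i) ≤ pathMax H L ω :=
  Finset.le_sup' (fun i => H (ω i)) (Finset.mem_range.2 (Nat.lt_succ_of_le hi))

lemma pathMax_le (h : ∀ i ≤ L, H (ω i) ≤ m) : pathMax H L ω ≤ m :=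
  (Finset.sup'_le_iff _ _).2 fun i hi => h i (Nat.le_of_lt_succ (Finset.mem_range.1 hi))

lemma pathMax_mem_range (H : X → ℝ) (L : ℕ) (ω : ℕ → X) : pathMax H L ω ∈ Set.range H := by
  obtain ⟨i, -, h⟩ := Finset.exists_mem_eq_sup' Finset.nonempty_range_add_one fun i => H (ω i)
  exact ⟨ω i, h.symm⟩

end PathMax

section CommunicationHeight

variable [Finite X] {rel : X → X → Prop} {H : X → ℝ} {a b c : X}

lemma finite_setOf_pathMax (rel : X → X → Prop) (H : X → ℝ) (a b : X) :
    {m : ℝ | ∃ L ω, IsPathW rel a b L ω ∧ m = pathMax H L ω}.Finite :=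
  (Set.finite_range H).subset (by rintro _ ⟨L, ω, -, rfl⟩; exact pathMax_mem_range H L ω)

lemma commH_le_pathMax {L : ℕ} {ω : ℕ → X} (h : IsPathW rel a b L ω) :
    commH rel H a b ≤ pathMax H L ω :=
  csInf_le (finite_setOf_pathMax rel H a b).bddBelow ⟨L, ω, h, rfl⟩

lemma exists_isPathW_commH_eq (hab : ∃ L ω, IsPathW rel a b L ω) :
    ∃ L ω, IsPathW rel a b L ω ∧ commH rel H a b = pathMax H L ω := by
  obtain ⟨L, ω, h⟩ := hab
  exact Set.Nonempty.csInf_mem (by exact ⟨_, L, ω, h, rfl⟩) (finite_setOf_pathMax rel H a b)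

lemma le_commH_right (hab : ∃ L ω, IsPathW rel a b L ω) : H b ≤ commH rel H a b := by
  obtain ⟨L, ω, h, e⟩ := exists_isPathW_commH_eq (H := H) hab
  exact e ▸ h.2.1 ▸ le_pathMax ω le_rfl

lemma commH_self_le (a : X) : commH rel H a a ≤ H a :=
  (commH_le_pathMax (L := 0) (ω := fun _ => a) ⟨rfl, rfl, by simp⟩).trans
    (pathMax_le fun _ _ => le_rfl)

lemma commH_le_commH_symm (hsymm : Symmetric rel) (hab : ∃ L ω, IsPathW rel a b L ω) :
    commH rel H b a ≤ commH rel H a b := by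
  obtain ⟨L, ω, h, e⟩ := exists_isPathW_commH_eq (H := H) hab
  exact e ▸ (commH_le_pathMax (h.reverse hsymm)).trans
    (pathMax_le fun i _ => le_pathMax ω (by omega))

lemma commH_comm (hsymm : Symmetric rel) (hconn : ConnGraph rel) (a b : X) :
    commH rel H a b = commH rel H b a :=
  le_antisymm (commH_le_commH_symm hsymm (hconn b a)) (commH_le_commH_symm hsymm (hconn a b))

lemma commH_le_max (hab : ∃ L ω, IsPathW rel a b L ω) (hbc : ∃ L ω, IsPathW rel b c L ω) :
    commH rel H a c ≤ max (commH rel H a b) (commH rel H b c) := by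
  obtain ⟨L₁, ω₁, h₁, e₁⟩ := exists_isPathW_commH_eq (H := H) hab
  obtain ⟨L₂, ω₂, h₂, e₂⟩ := exists_isPathW_commH_eq (H := H) hbc
  refine (commH_le_pathMax (h₁.append h₂)).trans (pathMax_le fun i hi => ?_)
  rw [e₁, e₂]
  split_ifs with h
  · exact le_max_of_le_left (le_pathMax ω₁ h)
  · exact le_max_of_le_right (le_pathMax ω₂ (by omega))

lemma exists_commH_eq_commHS {A B : Set X} (hA : A.Nonempty) (hB : B.Nonempty) :
    ∃ a ∈ A, ∃ b ∈ B, commH rel H a b = commHS rel H A B := by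
  have hfin : {m : ℝ | ∃ a ∈ A, ∃ b ∈ B, m = commH rel H a b}.Finite :=
    (Set.finite_range fun p : X × X => commH rel H p.1 p.2).subset
      (by rintro _ ⟨a, -, b, -, rfl⟩; exact ⟨(a, b), rfl⟩)
  obtain ⟨a, ha⟩ := hA
  obtain ⟨b, hb⟩ := hB
  obtain ⟨a, ha, b, hb, e⟩ := Set.Nonempty.csInf_mem (by exact ⟨_, a, ha, b, hb, rfl⟩) hfin
  exact ⟨a, ha, b, hb, e.symm⟩

lemma exists_lt_commH_le {η : X} {V : ℝ} (hI : {ξ : X | H ξ < H η}.Nonempty)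
    (hV : commHS rel H {η} {ξ : X | H ξ < H η} - H η ≤ V) :
    ∃ ξ, H ξ < H η ∧ commH rel H η ξ ≤ H η + V := by
  obtain ⟨_, rfl, ξ, hξ, e⟩ := exists_commH_eq_commHS (rel := rel) (Set.singleton_nonempty η) hI
  exact ⟨ξ, hξ, by linarith⟩

lemma commH_le_add_of_stability_le (hconn : ConnGraph rel) {sq bx : X} {V : ℝ}
    (hV : ∀ η : X, η ≠ sq → η ≠ bx →
      {ξ : X | H ξ < H η}.Nonempty ∧ commHS rel H {η} {ξ : X | H ξ < H η} - H η ≤ V)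
    (η : X) (hηsq : η ≠ sq) (hηbx : η ≠ bx) (hη : H η ≤ H sq) :
    commH rel H η bx ≤ H η + V := by
  induction η using (Finite.wellFounded_of_trans_of_irrefl (InvImage (· < ·) H)).induction with
  | _ η ih =>
  obtain ⟨ξ, hξη, hηξ⟩ := exists_lt_commH_le (hV η hηsq hηbx).1 (hV η hηsq hηbx).2
  rcases eq_or_ne ξ bx with rfl | hξbx
  · exact hηξ
  have hξsq : ξ ≠ sq := by rintro rfl; linarith
  have hξ := ih ξ hξη hξsq hξbx (by linarith)
  calc commH rel H η bx ≤ max (commH rel H η ξ) (commH rel H ξ bx) :=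
        commH_le_max (hconn η ξ) (hconn ξ bx)
    _ ≤ H η + V := max_le hηξ (by linarith)

end CommunicationHeight

theorem stmt_9_general [Fintype X] (rel : X → X → Prop) (H : X → ℝ)
    (hsymm : Symmetric rel) (hconn : ConnGraph rel)
    (sq bx : X) (hne : sq ≠ bx)
    -- (H1): X_stab = {⊞}
    (hH1 : {η : X | ∀ ξ, H η ≤ H ξ} = {bx})
    -- (H2): ∃ V* < Γ* with V_η ≤ V* for all η ∉ {□,⊞}
    (hH2 : ∃ Vs : ℝ, Vs < commH rel H sq bx - H sq ∧
      ∀ η : X, η ≠ sq → η ≠ bx →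
        ({ξ : X | H ξ < H η}).Nonempty ∧
        commHS rel H {η} {ξ : X | H ξ < H η} - H η ≤ Vs) :
    ∀ η : X, η ≠ sq → commH rel H η sq ≤ commH rel H η bx → H sq < H η := by
  intro η hηsq hΦ
  by_contra! hη
  obtain ⟨Vs, hVs, hV⟩ := hH2
  rcases eq_or_ne η bx with rfl | hηbx
  · have hbx_min : ∀ ξ, H η ≤ H ξ := hH1.ge rfl
    have hsq_min : sq ∈ {η : X | ∀ ξ, H η ≤ H ξ} := fun ξ =>
      calc H sq ≤ commH rel H η sq := le_commH_right (hconn η sq)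
        _ ≤ H η := hΦ.trans (commH_self_le η)
        _ ≤ H ξ := hbx_min ξ
    rw [hH1] at hsq_min
    exact hne hsq_min
  · have hΓ : commH rel H sq bx ≤ commH rel H η bx :=
      (commH_le_max (hconn sq η) (hconn η bx)).trans
        (max_le (commH_comm hsymm hconn sq η ▸ hΦ) le_rfl)
    have hdescent := commH_le_add_of_stability_le hconn hV η hηsq hηbx hη
    linarith

/-- under (H1)–(H2), every η ≠ □ with Φ(η,□) ≤ Φ(η,⊞) satisfies
H(η) > H(□) = 0. -/
theorem stmt_9 [Fintype X] (rel : X → X → Prop) (H : X → ℝ)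
    (hsymm : Symmetric rel) (hconn : ConnGraph rel)
    (sq bx : X) (hne : sq ≠ bx) (Hsq : H sq = 0)
    -- (H1): X_stab = {⊞}
    (hH1 : {η : X | ∀ ξ, H η ≤ H ξ} = {bx})
    -- (H2): ∃ V* < Γ* with V_η ≤ V* for all η ∉ {□,⊞}
    (hH2 : ∃ Vs : ℝ, Vs < commH rel H sq bx - H sq ∧
      ∀ η : X, η ≠ sq → η ≠ bx →
        ({ξ : X | H ξ < H η}).Nonempty ∧
        commHS rel H {η} {ξ : X | H ξ < H η} - H η ≤ Vs) :
    ∀ η : X, η ≠ sq → commH rel H η sq ≤ commH rel H η bx → H sq < H η :=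
  stmt_9_general rel H hsymm hconn sq bx hne hH1 hH2
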